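/- arXiv:1802.10272 — 2 statements merged into one kernel-verified Lean document; each statement's English description precedes it below -/
import Mathlib

section
/- Let ρ: ℝ^d → ℝ be nonnegative measurable with ‖ρ‖_{L¹} ≤ C₁ and ‖ρ‖_{L^∞} ≤ C_∞(1+t)^{-d/θ} for fixed t ≥ 0, θ > 0, d ≥ 2. Then the Newtonian field ∇ψ(x) = c_d∫(x−y)|x−y|^{-d}ρ(y)dy satisfies the pointwise bound |∇ψ(x)| ≤ C(1+t)^{-(d−1)/θ} for all x, with C depending only on d, θ, C₁, C_∞. -/
open MeasureTheory Metric ENNReal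

lemma pow_calc (d : ℕ) {R : ℝ} (hR : 0 < R) (n : ℕ) :
    (R * (2⁻¹:ℝ)^(n+1)) ^ (1 - (d:ℝ)) * (R * (2⁻¹:ℝ)^n)^(d:ℕ)
      = R * (2⁻¹:ℝ) ^ ((1:ℝ) - (d:ℝ)) * (2⁻¹:ℝ)^n := by
  have hs : (0:ℝ) < 2⁻¹ := by norm_num
  have e1 : (R * (2⁻¹:ℝ)^(n+1)) ^ (1 - (d:ℝ))
      = R ^ (1-(d:ℝ)) * (2⁻¹:ℝ) ^ (((n:ℝ)+1) * (1 - (d:ℝ))) := by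
    rw [Real.mul_rpow hR.le (by positivity), ← Real.rpow_natCast (2⁻¹:ℝ) (n+1),
      ← Real.rpow_mul hs.le]
    push_cast
    ring_nf
  have e2 : (R * (2⁻¹:ℝ)^n)^(d:ℕ) = R^(d:ℝ) * (2⁻¹:ℝ)^((n:ℝ)*(d:ℝ)) := by
    rw [← Real.rpow_natCast (R * (2⁻¹:ℝ)^n) d, Real.mul_rpow hR.le (by positivity),
      ← Real.rpow_natCast (2⁻¹:ℝ) n, ← Real.rpow_mul hs.le]
  rw [e1, e2]
  rw [show R ^ (1-(d:ℝ)) * (2⁻¹:ℝ) ^ (((n:ℝ)+1) * (1 - (d:ℝ))) * (R^(d:ℝ) * (2⁻¹:ℝ)^((n:ℝ)*(d:ℝ)))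
      = (R ^ (1-(d:ℝ)) * R^(d:ℝ)) * ((2⁻¹:ℝ) ^ (((n:ℝ)+1) * (1 - (d:ℝ))) * (2⁻¹:ℝ)^((n:ℝ)*(d:ℝ))) by ring,
    ← Real.rpow_add hR, ← Real.rpow_add hs]
  rw [show (1-(d:ℝ)) + (d:ℝ) = 1 by ring, Real.rpow_one,
    show ((n:ℝ)+1) * (1 - (d:ℝ)) + (n:ℝ)*(d:ℝ) = ((1:ℝ) - (d:ℝ)) + (n:ℝ) by ring,
    Real.rpow_add hs, Real.rpow_natCast, mul_assoc]

lemma annuli_bound (d : ℕ) (hd : 2 ≤ d) : ∃ c : ℝ, 0 < c ∧ ∀ R : ℝ, 0 < R →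
    ∫⁻ z in ball (0 : EuclideanSpace ℝ (Fin d)) R, ENNReal.ofReal (‖z‖ ^ (1 - (d:ℝ)))
      ≤ ENNReal.ofReal (c * R) := by
  set E := EuclideanSpace ℝ (Fin d)
  set v : ℝ≥0∞ := volume (ball (0:E) 1) with hv
  have hvpos : 0 < v := measure_ball_pos _ _ one_pos
  have hvtop : v ≠ ⊤ := measure_ball_lt_top.ne
  have hs : (0:ℝ) < 2⁻¹ := by norm_num
  have hvr : 0 < v.toReal := ENNReal.toReal_pos hvpos.ne' hvtop
  refine ⟨v.toReal * 2 * (2⁻¹:ℝ) ^ ((1:ℝ) - (d:ℝ)), by positivity, fun R hR => ?_⟩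
  set g : E → ℝ≥0∞ := fun z => ENNReal.ofReal (‖z‖ ^ (1 - (d:ℝ))) with hg
  set A : ℕ → Set E := fun n =>
    closedBall 0 (R * (2⁻¹:ℝ)^n) \ ball 0 (R * (2⁻¹:ℝ)^(n+1)) with hA
  -- covering
  have hcov : ball (0:E) R ⊆ {0} ∪ ⋃ n, A n := by
    intro z hz
    rcases eq_or_ne z 0 with rfl | hz0
    · exact Set.mem_union_left _ rfl
    have hznorm : 0 < ‖z‖ := norm_pos_iff.mpr hz0
    have hzR : ‖z‖ < R := by simpa [dist_zero_right] using hz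
    set q : ℝ := R / ‖z‖ with hq
    have hq1 : 1 < q := (one_lt_div hznorm).mpr hzR
    set m : ℕ := ⌊q⌋₊ with hm
    have hm1 : 1 ≤ m := Nat.le_floor (by exact_mod_cast hq1.le)
    set n : ℕ := Nat.log 2 m with hn
    have h1 : (2:ℕ)^n ≤ m := Nat.pow_log_le_self 2 (by omega)
    have h2 : m < 2^(n+1) := Nat.lt_pow_succ_log_self (by norm_num) m
    have hq2 : ((2:ℝ))^n ≤ q := by
      calc ((2:ℝ))^n = ((2^n : ℕ) : ℝ) := by push_cast; ring
        _ ≤ (m:ℝ) := by exact_mod_cast h1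
        _ ≤ q := Nat.floor_le (by positivity)
    have hq3 : q ≤ ((2:ℝ))^(n+1) := by
      have : q < (m:ℝ) + 1 := Nat.lt_floor_add_one q
      have h2' : ((m:ℕ):ℝ) + 1 ≤ ((2:ℝ))^(n+1) := by
        have : (m + 1 : ℕ) ≤ 2^(n+1) := h2
        exact_mod_cast this
      linarith
    refine Set.mem_union_right _ (Set.mem_iUnion.mpr ⟨n, ?_⟩)
    constructor
    · rw [mem_closedBall, dist_zero_right]
      rw [le_div_iff₀ hznorm] at hq2
      calc ‖z‖ ≤ R / 2^n := by rw [le_div_iff₀ (by positivity)]; linarith [hq2]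
        _ = R * (2⁻¹:ℝ)^n := by rw [inv_pow]; ring
    · intro hmem
      rw [mem_ball, dist_zero_right] at hmem
      have : R ≤ ‖z‖ * 2^(n+1) := by
        rw [hq] at hq3
        rw [div_le_iff₀ hznorm] at hq3
        linarith
      have : R * (2⁻¹:ℝ)^(n+1) ≤ ‖z‖ := by
        rw [inv_pow]
        rw [mul_inv_le_iff₀ (by positivity)]
        linarith
      linarith
  have hg0 : g 0 = 0 := by
    have : (1 : ℝ) - (d:ℝ) ≠ 0 := by
      have : (2:ℝ) ≤ (d:ℝ) := by exact_mod_cast hd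
      linarith
    simp [hg, Real.zero_rpow this]
  have h0 : ∫⁻ z in ({0} : Set E), g z = 0 := by
    rw [lintegral_singleton, hg0, zero_mul]
  calc ∫⁻ z in ball (0:E) R, g z
      ≤ ∫⁻ z in ({0} ∪ ⋃ n, A n : Set E), g z := lintegral_mono_set hcov
    _ ≤ (∫⁻ z in ({0} : Set E), g z) + ∫⁻ z in (⋃ n, A n), g z := lintegral_union_le _ _ _
    _ = ∫⁻ z in (⋃ n, A n), g z := by rw [h0, zero_add]
    _ ≤ ∑' n, ∫⁻ z in A n, g z := lintegral_iUnion_le _ _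
    _ ≤ ∑' n, ENNReal.ofReal ((R * (2⁻¹:ℝ)^(n+1)) ^ (1 - (d:ℝ))) * volume (A n) := by
        gcongr with n
        calc ∫⁻ z in A n, g z
            ≤ ∫⁻ _ in A n, ENNReal.ofReal ((R * (2⁻¹:ℝ)^(n+1)) ^ (1 - (d:ℝ))) := by
              refine setLIntegral_mono (by measurability) ?_
              intro z hz
              rcases hz with ⟨_, hz2⟩
              rw [mem_ball, dist_zero_right, not_lt] at hz2
              have h2d : (2:ℝ) ≤ (d:ℝ) := by exact_mod_cast hd
              exact ENNReal.ofReal_le_ofReal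
                (Real.rpow_le_rpow_of_nonpos (by positivity) hz2 (by linarith))
          _ = ENNReal.ofReal ((R * (2⁻¹:ℝ)^(n+1)) ^ (1 - (d:ℝ))) * volume (A n) := by
              rw [setLIntegral_const]
    _ ≤ ∑' n, ENNReal.ofReal ((R * (2⁻¹:ℝ)^(n+1)) ^ (1 - (d:ℝ)))
          * (ENNReal.ofReal ((R * (2⁻¹:ℝ)^n) ^ (d:ℕ)) * v) := by
        gcongr with n
        have : volume (A n) ≤ volume (closedBall (0:E) (R * (2⁻¹:ℝ)^n)) :=
          measure_mono Set.diff_subset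
        refine this.trans ?_
        rw [Measure.addHaar_closedBall _ _ (by positivity)]
        rw [finrank_euclideanSpace_fin]
    _ = ∑' n, ENNReal.ofReal (R * (2⁻¹:ℝ) ^ ((1:ℝ) - (d:ℝ))) * ENNReal.ofReal ((2⁻¹:ℝ))^n * v := by
        congr 1
        funext n
        rw [← mul_assoc, ← ENNReal.ofReal_mul (by positivity), pow_calc d hR n,
          ENNReal.ofReal_mul (by positivity), ENNReal.ofReal_pow hs.le]
    _ = ENNReal.ofReal (R * (2⁻¹:ℝ) ^ ((1:ℝ) - (d:ℝ))) * (∑' n, ENNReal.ofReal ((2⁻¹:ℝ))^n) * v := by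
        rw [ENNReal.tsum_mul_right, ENNReal.tsum_mul_left, mul_assoc]
    _ = ENNReal.ofReal (R * (2⁻¹:ℝ) ^ ((1:ℝ) - (d:ℝ))) * 2 * v := by
        congr 2
        rw [ENNReal.tsum_geometric]
        rw [show (1:ℝ≥0∞) - ENNReal.ofReal 2⁻¹ = 2⁻¹ by
          rw [ENNReal.ofReal_inv_of_pos two_pos, ENNReal.ofReal_ofNat]; simp [ENNReal.one_sub_inv_two]]
        simp
    _ = ENNReal.ofReal (v.toReal * 2 * (2⁻¹:ℝ) ^ ((1:ℝ) - (d:ℝ)) * R) := by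
        rw [← ENNReal.ofReal_toReal hvtop]
        rw [← ENNReal.ofReal_ofNat 2, ← ENNReal.ofReal_mul (by positivity),
          ← ENNReal.ofReal_mul (by positivity)]
        congr 1
        rw [ENNReal.toReal_ofReal ENNReal.toReal_nonneg]
        ring

/-- If `‖ρ‖_{L¹} ≤ C₁` and `‖ρ‖_{L^∞} ≤ C_∞ (1+t)^{-d/θ}`, then the Newtonian field
`∇ψ(x) = c_d ∫ (x−y)|x−y|^{-d} ρ(y) dy` satisfies `|∇ψ(x)| ≤ C (1+t)^{-(d−1)/θ}` for a
constant `C` depending only on `d, θ, C₁, C_∞`. -/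
theorem stmt9 (d : ℕ) (hd : 2 ≤ d) (θ C₁ Cinf : ℝ) (hθ : 0 < θ)
    (hC₁ : 0 < C₁) (hCinf : 0 < Cinf) :
    ∃ C : ℝ, 0 < C ∧
      ∀ t : ℝ, 0 ≤ t →
      ∀ (ρ : EuclideanSpace ℝ (Fin d) → ℝ),
        (∀ y, 0 ≤ ρ y) → Integrable ρ →
        (∫ y, ρ y) ≤ C₁ →
        (∀ y, ρ y ≤ Cinf * (1 + t) ^ (-(d : ℝ) / θ)) →
        ∀ (F : EuclideanSpace ℝ (Fin d) → EuclideanSpace ℝ (Fin d)),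
          (∀ x, F x = (Real.Gamma (d / 2) / (2 * Real.pi ^ ((d : ℝ) / 2))) •
            ∫ y, ((‖x - y‖ ^ (d : ℕ))⁻¹ * ρ y) • (x - y)) →
          ∀ x, ‖F x‖ ≤ C * (1 + t) ^ (-((d : ℝ) - 1) / θ) := by
  obtain ⟨c, hc, hann⟩ := annuli_bound d hd
  have hd0 : (0:ℝ) < (d:ℝ)/2 := by
    have : (0:ℕ) < d := by omega
    have : (0:ℝ) < (d:ℝ) := by exact_mod_cast this
    linarith
  have h2d : (2:ℝ) ≤ (d:ℝ) := by exact_mod_cast hd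
  have hcd0 : (0:ℝ) < Real.Gamma ((d:ℝ) / 2) / (2 * Real.pi ^ ((d : ℝ) / 2)) := by
    have h1 : 0 < Real.Gamma ((d:ℝ)/2) := Real.Gamma_pos_of_pos hd0
    have h2 : 0 < Real.pi ^ ((d:ℝ)/2) := Real.rpow_pos_of_pos Real.pi_pos _
    positivity
  set cd : ℝ := Real.Gamma ((d:ℝ) / 2) / (2 * Real.pi ^ ((d : ℝ) / 2)) with hcd
  refine ⟨cd * (c * Cinf + C₁), by positivity, ?_⟩
  intro t ht ρ hρ0 hρint hρL1 hρLinf F hF x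
  have h1t : (0:ℝ) < 1 + t := by linarith
  set R : ℝ := (1 + t) ^ (θ⁻¹ : ℝ) with hRdef
  have hRpos : 0 < R := Real.rpow_pos_of_pos h1t _
  set M : ℝ := Cinf * (1 + t) ^ (-(d : ℝ) / θ) with hM
  have hM0 : 0 ≤ M := by positivity
  have hR1d : R ^ (1 - (d:ℝ)) = (1 + t) ^ (-((d:ℝ) - 1) / θ) := by
    rw [hRdef, ← Real.rpow_mul h1t.le]
    congr 1
    field_simp
    ring
  have hMR : (1 + t) ^ (-(d:ℝ)/θ) * R = (1 + t) ^ (-((d:ℝ) - 1) / θ) := by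
    rw [hRdef, ← Real.rpow_add h1t]
    congr 1
    field_simp
    ring
  set f : EuclideanSpace ℝ (Fin d) → EuclideanSpace ℝ (Fin d) := fun y => ((‖x - y‖ ^ (d : ℕ))⁻¹ * ρ y) • (x - y) with hf
  set G : EuclideanSpace ℝ (Fin d) → ℝ≥0∞ := fun z => Set.indicator (ball (0:EuclideanSpace ℝ (Fin d)) R)
      (fun z => ENNReal.ofReal (‖z‖ ^ (1 - (d:ℝ)))) z with hG
  have hGmeas : Measurable G := by
    refine Measurable.indicator ?_ measurableSet_ball
    measurability
  have hnorm : ∀ y, ‖f y‖ = (‖x - y‖ ^ (d:ℕ))⁻¹ * ρ y * ‖x - y‖ := by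
    intro y
    rw [hf]
    rw [norm_smul, Real.norm_eq_abs, abs_of_nonneg]
    exact mul_nonneg (inv_nonneg.2 (pow_nonneg (norm_nonneg _) _)) (hρ0 y)
  have hrw : ∀ y, x ≠ y → (‖x - y‖ ^ (d:ℕ))⁻¹ * ρ y * ‖x - y‖ = ρ y * ‖x - y‖ ^ (1 - (d:ℝ)) := by
    intro y hyx
    have hr : 0 < ‖x - y‖ := norm_pos_iff.mpr (sub_ne_zero.mpr hyx)
    rw [Real.rpow_sub hr, Real.rpow_one, Real.rpow_natCast]
    field_simp
  have hpt : ∀ y, ENNReal.ofReal ‖f y‖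
      ≤ ENNReal.ofReal M * G (y - x) + ENNReal.ofReal (R ^ (1-(d:ℝ)) * ρ y) := by
    intro y
    by_cases hmem : y - x ∈ ball (0:EuclideanSpace ℝ (Fin d)) R
    · have hGy : G (y - x) = ENNReal.ofReal (‖y - x‖ ^ (1 - (d:ℝ))) :=
        Set.indicator_of_mem hmem _
      rcases eq_or_ne x y with rfl | hyx
      · refine le_trans ?_ le_self_add
        simp [hnorm, hGy]
      · refine le_trans ?_ le_self_add
        rw [hGy, ← ENNReal.ofReal_mul hM0, hnorm y, hrw y hyx, norm_sub_rev x y]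
        exact ENNReal.ofReal_le_ofReal
          (mul_le_mul_of_nonneg_right (hρLinf y) (Real.rpow_nonneg (norm_nonneg _) _))
    · have hGy : G (y - x) = 0 := Set.indicator_of_notMem hmem _
      have hRy : R ≤ ‖y - x‖ := by
        rw [mem_ball_zero_iff, not_lt] at hmem
        exact hmem
      have hyx : x ≠ y := by
        intro h
        rw [h, sub_self, norm_zero] at hRy
        linarith
      rw [hGy, mul_zero, zero_add, hnorm y, hrw y hyx]
      refine ENNReal.ofReal_le_ofReal ?_
      rw [mul_comm (R ^ (1-(d:ℝ)))]
      refine mul_le_mul_of_nonneg_left ?_ (hρ0 y)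
      refine Real.rpow_le_rpow_of_nonpos hRpos ?_ (by linarith)
      rw [norm_sub_rev]
      exact hRy
  have key : ∫⁻ y, ENNReal.ofReal ‖f y‖
      ≤ ENNReal.ofReal ((c * Cinf + C₁) * (1+t) ^ (-((d:ℝ)-1)/θ)) := by
    calc ∫⁻ y, ENNReal.ofReal ‖f y‖
        ≤ ∫⁻ y, (ENNReal.ofReal M * G (y - x) + ENNReal.ofReal (R ^ (1-(d:ℝ)) * ρ y)) :=
          lintegral_mono hpt
      _ = ENNReal.ofReal M * (∫⁻ y, G (y - x))
            + ENNReal.ofReal (R ^ (1-(d:ℝ))) * ∫⁻ y, ENNReal.ofReal (ρ y) := by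
          rw [lintegral_add_left (f := fun y => ENNReal.ofReal M * G (y - x))
            (((hGmeas.comp (measurable_id.sub measurable_const)).const_mul _))]
          rw [lintegral_const_mul' _ _ ENNReal.ofReal_ne_top]
          congr 1
          simp_rw [ENNReal.ofReal_mul (Real.rpow_nonneg hRpos.le _)]
          rw [lintegral_const_mul' _ _ ENNReal.ofReal_ne_top]
      _ ≤ ENNReal.ofReal M * ENNReal.ofReal (c * R)
            + ENNReal.ofReal (R ^ (1-(d:ℝ))) * ENNReal.ofReal C₁ := by
          gcongr
          · rw [lintegral_sub_right_eq_self G x]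
            simp only [hG]
            rw [lintegral_indicator measurableSet_ball]
            exact hann R hRpos
          · rw [← ofReal_integral_eq_lintegral_ofReal hρint (ae_of_all _ hρ0)]
            exact ENNReal.ofReal_le_ofReal hρL1
      _ = ENNReal.ofReal ((c * Cinf + C₁) * (1+t) ^ (-((d:ℝ)-1)/θ)) := by
          rw [← ENNReal.ofReal_mul hM0, ← ENNReal.ofReal_mul (Real.rpow_nonneg hRpos.le _),
            ← ENNReal.ofReal_add (by positivity) (by positivity)]
          congr 1
          rw [hM]
          linear_combination (c * Cinf) * hMR + C₁ * hR1d
  calc ‖F x‖ = cd * ‖∫ y, f y‖ := by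
        rw [hF x, norm_smul, Real.norm_eq_abs, abs_of_pos hcd0]
    _ ≤ cd * ((c * Cinf + C₁) * (1+t) ^ (-((d:ℝ)-1)/θ)) := by
        refine mul_le_mul_of_nonneg_left ?_ hcd0.le
        refine (norm_integral_le_lintegral_norm f).trans ?_
        exact ENNReal.toReal_le_of_le_ofReal (by positivity) key
    _ = (cd * (c * Cinf + C₁)) * (1+t) ^ (-((d:ℝ)-1)/θ) := by ring
end

section
/- Let 0 < θ ≤ 2 ≤ d and G_θ the fractional heat kernel satisfying the pointwise bounds 1/(Ct^{d/θ}) ≤ G_θ(x,t) ≤ C/t^{d/θ} for |x| ≤ Kt^{1/θ} and t/(C|x|^{d+θ}) ≤ G_θ(x,t) ≤ Ct/|x|^{d+θ} for |x| ≥ Kt^{1/θ}. Then for q > d/θ, the weighted norm satisfies ‖|x|^d G_θ(·,t)‖_{L^q(ℝ^d)} ≤ C'(1+t)^{d/(qθ)} for all t ≥ 1, and ‖|x|^d G_θ(·,t)‖_{L^∞(ℝ^d)} ≤ C' for t in compact subsets of (0,∞). -/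
open MeasureTheory Real
open scoped ENNReal

lemma aux_scale (d : ℕ) {a r : ℝ} (ha : 0 < a) :
    ∫⁻ (x : EuclideanSpace ℝ (Fin d)), ENNReal.ofReal ((a + ‖x‖) ^ (-r)) =
      ENNReal.ofReal (a ^ ((d : ℝ) - r)) *
        ∫⁻ (y : EuclideanSpace ℝ (Fin d)), ENNReal.ofReal ((1 + ‖y‖) ^ (-r)) := by
  set E := EuclideanSpace ℝ (Fin d)
  have hcont : Continuous fun x : E => ENNReal.ofReal ((a + ‖x‖) ^ (-r)) := by
    apply ENNReal.continuous_ofReal.comp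
    exact (continuous_const.add continuous_norm).rpow_const fun x => Or.inl (add_pos_of_pos_of_nonneg ha (norm_nonneg x)).ne'
  have hmap : Measure.map (a • ·) (volume : Measure E) =
      ENNReal.ofReal |(a ^ Module.finrank ℝ E)⁻¹| • volume :=
    Measure.map_addHaar_smul volume ha.ne'
  have h1 : ∫⁻ y : E, ENNReal.ofReal ((a + ‖a • y‖) ^ (-r)) =
      ENNReal.ofReal |(a ^ Module.finrank ℝ E)⁻¹| * ∫⁻ x : E, ENNReal.ofReal ((a + ‖x‖) ^ (-r)) := by
    rw [← lintegral_map hcont.measurable (measurable_const_smul a), hmap,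
      lintegral_smul_measure, smul_eq_mul]
  have hD : Module.finrank ℝ E = d := finrank_euclideanSpace_fin
  have had : (0:ℝ) < a ^ d := pow_pos ha d
  have h2 : ∀ y : E, ENNReal.ofReal ((a + ‖a • y‖) ^ (-r)) =
      ENNReal.ofReal (a ^ (-r)) * ENNReal.ofReal ((1 + ‖y‖) ^ (-r)) := by
    intro y
    rw [norm_smul, Real.norm_eq_abs, abs_of_pos ha, ← mul_one_add,
      Real.mul_rpow ha.le (by positivity), ENNReal.ofReal_mul (by positivity)]
  simp only [h2, lintegral_const_mul' _ _ ENNReal.ofReal_ne_top] at h1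
  rw [hD, abs_of_pos (by positivity : (0:ℝ) < (a ^ d)⁻¹)] at h1
  rw [ENNReal.ofReal_inv_of_pos had] at h1
  have hne : ENNReal.ofReal (a ^ d) ≠ 0 := by
    simp [ENNReal.ofReal_eq_zero, not_le, had]
  have := congrArg (fun z => ENNReal.ofReal (a ^ d) * z) h1
  simp only [← mul_assoc, ENNReal.mul_inv_cancel hne ENNReal.ofReal_ne_top, one_mul] at this
  rw [← this, ← ENNReal.ofReal_mul had.le]
  congr 2
  rw [← Real.rpow_natCast a d, ← Real.rpow_add ha, sub_eq_add_neg]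

/-- Given the standard pointwise two-sided bounds on the fractional heat kernel, for
`q > d/θ` the weighted norm satisfies `‖|x|^d G_θ(·,t)‖_{L^q} ≤ C'(1+t)^{d/(qθ)}` for
`t ≥ 1`, and `‖|x|^d G_θ(·,t)‖_{L^∞} ≤ C''` uniformly for `t` in compact subsets of
`(0,∞)`. -/
theorem stmt17 (d : ℕ) (hd : 2 ≤ d) (θ : ℝ) (hθ1 : 0 < θ) (hθ2 : θ ≤ 2)
    (K C : ℝ) (hK : 0 < K) (hC : 1 < C)
    (G : EuclideanSpace ℝ (Fin d) → ℝ → ℝ)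
    (hbd1 : ∀ t : ℝ, 0 < t → ∀ x : EuclideanSpace ℝ (Fin d), ‖x‖ ≤ K * t ^ (1 / θ) →
      1 / (C * t ^ ((d : ℝ) / θ)) ≤ G x t ∧ G x t ≤ C / t ^ ((d : ℝ) / θ))
    (hbd2 : ∀ t : ℝ, 0 < t → ∀ x : EuclideanSpace ℝ (Fin d), K * t ^ (1 / θ) ≤ ‖x‖ →
      t / (C * ‖x‖ ^ ((d : ℝ) + θ)) ≤ G x t ∧ G x t ≤ C * t / ‖x‖ ^ ((d : ℝ) + θ))
    (q : ℝ) (hq : (d : ℝ) / θ < q) :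
    (∃ C' : ℝ, 0 < C' ∧ ∀ t : ℝ, 1 ≤ t →
      eLpNorm (fun x : EuclideanSpace ℝ (Fin d) => ‖x‖ ^ (d : ℕ) * G x t)
          (ENNReal.ofReal q) volume ≤
        ENNReal.ofReal (C' * (1 + t) ^ ((d : ℝ) / (q * θ)))) ∧
    (∀ Kc : Set ℝ, IsCompact Kc → Kc ⊆ Set.Ioi (0 : ℝ) →
      ∃ C'' : ℝ, 0 < C'' ∧ ∀ t ∈ Kc, ∀ x : EuclideanSpace ℝ (Fin d),
        ‖x‖ ^ (d : ℕ) * G x t ≤ C'') := by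
  have hC0 : (0:ℝ) < C := lt_trans one_pos hC
  have hd0 : (0:ℝ) < (d:ℝ) := by exact_mod_cast (by omega : 0 < d)
  have hq0 : (0:ℝ) < q := lt_trans (div_pos hd0 hθ1) hq
  have hθq : (d:ℝ) < θ * q := by
    rw [div_lt_iff₀ hθ1] at hq; linarith
  -- nonnegativity of G
  have hGnn : ∀ t : ℝ, 0 < t → ∀ x : EuclideanSpace ℝ (Fin d), 0 ≤ G x t := by
    intro t ht x
    rcases le_total ‖x‖ (K * t ^ (1/θ)) with h | h
    · exact le_trans (by positivity) (hbd1 t ht x h).1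
    · refine le_trans ?_ (hbd2 t ht x h).1
      exact div_nonneg ht.le (by positivity)
  -- case 1 bound
  have hcase1 : ∀ t : ℝ, 0 < t → ∀ x : EuclideanSpace ℝ (Fin d), ‖x‖ ≤ K * t ^ (1/θ) →
      ‖x‖ ^ (d : ℕ) * G x t ≤ C * K ^ (d : ℕ) := by
    intro t ht x hx
    have ha0 : (0:ℝ) < t ^ (1/θ) := rpow_pos_of_pos ht _
    have haD : (t ^ (1/θ)) ^ (d:ℕ) = t ^ ((d:ℝ)/θ) := by
      rw [← Real.rpow_natCast (t ^ (1/θ)) d, ← Real.rpow_mul ht.le]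
      congr 1; ring
    have hT : (0:ℝ) < t ^ ((d:ℝ)/θ) := rpow_pos_of_pos ht _
    calc ‖x‖ ^ (d:ℕ) * G x t ≤ (K * t ^ (1/θ)) ^ (d:ℕ) * (C / t ^ ((d:ℝ)/θ)) := by
          apply mul_le_mul (pow_le_pow_left₀ (norm_nonneg x) hx d) (hbd1 t ht x hx).2
            (hGnn t ht x) (by positivity)
      _ = C * K ^ (d:ℕ) := by
          rw [mul_pow, haD]; field_simp
  -- case 2 bound
  have hcase2 : ∀ t : ℝ, 0 < t → ∀ x : EuclideanSpace ℝ (Fin d), K * t ^ (1/θ) ≤ ‖x‖ →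
      ‖x‖ ^ (d : ℕ) * G x t ≤ C * t * ‖x‖ ^ (-θ) := by
    intro t ht x hx
    have ha0 : (0:ℝ) < t ^ (1/θ) := rpow_pos_of_pos ht _
    have hx0 : (0:ℝ) < ‖x‖ := lt_of_lt_of_le (by positivity) hx
    have hxd : ‖x‖ ^ (d:ℕ) = ‖x‖ ^ ((d:ℕ):ℝ) := (Real.rpow_natCast _ _).symm
    have hdiv : ‖x‖ ^ ((d:ℕ):ℝ) / ‖x‖ ^ ((d:ℝ) + θ) = ‖x‖ ^ (-θ) := by
      rw [← Real.rpow_sub hx0]; congr 1; ring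
    calc ‖x‖ ^ (d:ℕ) * G x t ≤ ‖x‖ ^ ((d:ℕ):ℝ) * (C * t / ‖x‖ ^ ((d:ℝ) + θ)) := by
          rw [← hxd]
          exact mul_le_mul_of_nonneg_left (hbd2 t ht x hx).2 (by positivity)
      _ = C * t * (‖x‖ ^ ((d:ℕ):ℝ) / ‖x‖ ^ ((d:ℝ) + θ)) := by ring
      _ = C * t * ‖x‖ ^ (-θ) := by rw [hdiv]
  constructor
  · -- L^q part
    set M : ℝ := C * K ^ (d:ℕ) * (1+K) ^ θ + C * (1 + 1/K) ^ θ with hM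
    have hM0 : 0 < M := by positivity
    -- pointwise bound
    have main1 : ∀ t : ℝ, 0 < t → ∀ x : EuclideanSpace ℝ (Fin d),
        ‖x‖ ^ (d : ℕ) * G x t ≤ M * (t * (t ^ (1/θ) + ‖x‖) ^ (-θ)) := by
      intro t ht x
      have ha0 : (0:ℝ) < t ^ (1/θ) := rpow_pos_of_pos ht _
      set a := t ^ (1/θ) with ha
      have hanegθ : a ^ (-θ) = t⁻¹ := by
        rw [ha, ← Real.rpow_mul ht.le]
        rw [show (1/θ) * (-θ) = -1 by field_simp]
        exact Real.rpow_neg_one t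
      rcases le_total ‖x‖ (K * a) with h | h
      · refine le_trans (hcase1 t ht x h) ?_
        have h1 : (a + ‖x‖) ^ (-θ) ≥ (a + K * a) ^ (-θ) := by
          apply Real.rpow_le_rpow_of_nonpos (by positivity) (by linarith) (by linarith)
        have h2 : (a + K * a) ^ (-θ) = a ^ (-θ) * (1+K) ^ (-θ) := by
          rw [show a + K * a = a * (1+K) by ring, Real.mul_rpow ha0.le (by positivity)]
        have h3 : t * (a + ‖x‖) ^ (-θ) ≥ (1+K) ^ (-θ) := by
          calc t * (a + ‖x‖) ^ (-θ) ≥ t * (a ^ (-θ) * (1+K) ^ (-θ)) := by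
                rw [← h2]; exact mul_le_mul_of_nonneg_left h1 ht.le
            _ = (1+K) ^ (-θ) := by rw [hanegθ]; field_simp
        have h4 : C * K ^ (d:ℕ) * (1+K) ^ θ * (1+K) ^ (-θ) = C * K ^ (d:ℕ) := by
          rw [mul_assoc, ← Real.rpow_add (by positivity : (0:ℝ) < 1+K)]
          simp
        calc C * K ^ (d:ℕ) = C * K ^ (d:ℕ) * (1+K) ^ θ * (1+K) ^ (-θ) := h4.symm
          _ ≤ M * (1+K) ^ (-θ) := by
              apply mul_le_mul_of_nonneg_right _ (by positivity)
              rw [hM]; nlinarith [Real.rpow_pos_of_pos (by positivity : (0:ℝ) < 1 + 1/K) θ]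
          _ ≤ M * (t * (a + ‖x‖) ^ (-θ)) := mul_le_mul_of_nonneg_left h3 hM0.le
      · refine le_trans (hcase2 t ht x h) ?_
        have hx0 : (0:ℝ) < ‖x‖ := lt_of_lt_of_le (by positivity) h
        have hax : a + ‖x‖ ≤ (1 + 1/K) * ‖x‖ := by
          have h' : a ≤ ‖x‖ / K := by rw [le_div_iff₀ hK]; nlinarith
          have : (1 + 1/K) * ‖x‖ = ‖x‖ / K + ‖x‖ := by field_simp; ring
          linarith
        have h1 : ((1 + 1/K) * ‖x‖) ^ (-θ) ≤ (a + ‖x‖) ^ (-θ) :=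
          Real.rpow_le_rpow_of_nonpos (by positivity) hax (by linarith)
        have h2 : ((1 + 1/K) * ‖x‖) ^ (-θ) = (1 + 1/K) ^ (-θ) * ‖x‖ ^ (-θ) :=
          Real.mul_rpow (by positivity) hx0.le
        have h3 : (1 + 1/K) ^ θ * (1 + 1/K) ^ (-θ) = 1 := by
          rw [← Real.rpow_add (by positivity : (0:ℝ) < 1 + 1/K)]; simp
        have key : C * (1 + 1/K) ^ θ * (t * ((1 + 1/K) ^ (-θ) * ‖x‖ ^ (-θ)))
            = C * t * ‖x‖ ^ (-θ) := by
          rw [show C * (1 + 1/K) ^ θ * (t * ((1 + 1/K) ^ (-θ) * ‖x‖ ^ (-θ)))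
              = C * ((1 + 1/K) ^ θ * (1 + 1/K) ^ (-θ)) * (t * ‖x‖ ^ (-θ)) by ring, h3]
          ring
        calc C * t * ‖x‖ ^ (-θ)
            = C * (1 + 1/K) ^ θ * (t * ((1 + 1/K) ^ (-θ) * ‖x‖ ^ (-θ))) := key.symm
          _ ≤ C * (1 + 1/K) ^ θ * (t * (a + ‖x‖) ^ (-θ)) := by
              apply mul_le_mul_of_nonneg_left _ (by positivity)
              exact mul_le_mul_of_nonneg_left (h2 ▸ h1) ht.le
          _ ≤ M * (t * (a + ‖x‖) ^ (-θ)) := by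
              apply mul_le_mul_of_nonneg_right _ (by positivity)
              rw [hM]
              exact le_add_of_nonneg_left (by positivity)
    -- the integral estimate
    set I₁ := ∫⁻ (y : EuclideanSpace ℝ (Fin d)), ENNReal.ofReal ((1 + ‖y‖) ^ (-(θ*q)))
      with hI₁def
    have hI₁ : I₁ < ⊤ := by
      have := finite_integral_one_add_norm (E := EuclideanSpace ℝ (Fin d))
        (μ := volume) (r := θ*q) (by rw [finrank_euclideanSpace_fin]; exact hθq)
      exact this
    set I := I₁.toReal with hIdef
    have hI0 : 0 ≤ I := ENNReal.toReal_nonneg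
    refine ⟨M * I ^ (1/q) + 1, by positivity, ?_⟩
    intro t ht
    have ht0 : 0 < t := lt_of_lt_of_le one_pos ht
    set a := t ^ (1/θ) with hadef
    have ha0 : 0 < a := rpow_pos_of_pos ht0 _
    have hp0 : (ENNReal.ofReal q) ≠ 0 := by simp [ENNReal.ofReal_eq_zero, not_le, hq0]
    rw [eLpNorm_eq_lintegral_rpow_enorm_toReal hp0 ENNReal.ofReal_ne_top,
      ENNReal.toReal_ofReal hq0.le]
    have hlin : (∫⁻ (x : EuclideanSpace ℝ (Fin d)), (‖(‖x‖ ^ (d:ℕ) * G x t : ℝ)‖₊ : ℝ≥0∞) ^ q)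
        ≤ ENNReal.ofReal ((M*t)^q * a^((d:ℝ) - θ*q) * I) := by
      calc (∫⁻ (x : EuclideanSpace ℝ (Fin d)), (‖(‖x‖ ^ (d:ℕ) * G x t : ℝ)‖₊ : ℝ≥0∞) ^ q)
          ≤ ∫⁻ (x : EuclideanSpace ℝ (Fin d)),
              ENNReal.ofReal ((M*t)^q) * ENNReal.ofReal ((a + ‖x‖) ^ (-(θ*q))) := by
            apply lintegral_mono; intro x
            dsimp only
            have hfnn : 0 ≤ ‖x‖ ^ (d:ℕ) * G x t := mul_nonneg (by positivity) (hGnn t ht0 x)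
            have hb := main1 t ht0 x
            rw [← enorm_eq_nnnorm, Real.enorm_eq_ofReal_abs, ENNReal.ofReal_rpow_of_nonneg (abs_nonneg _) hq0.le,
              ← ENNReal.ofReal_mul (by positivity)]
            apply ENNReal.ofReal_le_ofReal
            calc |‖x‖ ^ (d:ℕ) * G x t| ^ q ≤ (M * (t * (a + ‖x‖) ^ (-θ))) ^ q := by
                  apply Real.rpow_le_rpow (abs_nonneg _) _ hq0.le
                  rw [abs_of_nonneg hfnn]; exact hb
              _ = (M*t)^q * (a + ‖x‖) ^ (-(θ*q)) := by
                  rw [show M * (t * (a + ‖x‖) ^ (-θ)) = (M*t) * ((a + ‖x‖) ^ (-θ)) by ring,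
                    Real.mul_rpow (by positivity) (by positivity),
                    ← Real.rpow_mul (by positivity), neg_mul]
        _ = ENNReal.ofReal ((M*t)^q) *
              ∫⁻ (x : EuclideanSpace ℝ (Fin d)), ENNReal.ofReal ((a + ‖x‖) ^ (-(θ*q))) :=
            lintegral_const_mul' _ _ ENNReal.ofReal_ne_top
        _ = ENNReal.ofReal ((M*t)^q) * (ENNReal.ofReal (a ^ ((d:ℝ) - θ*q)) * I₁) := by
            rw [aux_scale d ha0]
        _ = ENNReal.ofReal ((M*t)^q * a^((d:ℝ) - θ*q) * I) := by
            rw [← ENNReal.ofReal_toReal hI₁.ne, ← hIdef,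
              ← ENNReal.ofReal_mul (by positivity), ← ENNReal.ofReal_mul (by positivity),
              mul_assoc]
    have hB2 : (M*t)^q * a^((d:ℝ) - θ*q) * I = (M^q * I) * t^((d:ℝ)/θ) := by
      rw [hadef, ← Real.rpow_mul ht0.le, Real.mul_rpow hM0.le ht0.le]
      rw [show M^q * t^q * t^(1/θ * ((d:ℝ) - θ*q)) * I
          = M^q * I * (t^q * t^(1/θ * ((d:ℝ) - θ*q))) by ring,
        ← Real.rpow_add ht0]
      congr 2
      field_simp
      ring
    have hreal : ((M*t)^q * a^((d:ℝ) - θ*q) * I) ^ (1/q)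
        ≤ (M * I ^ (1/q) + 1) * (1+t) ^ ((d:ℝ)/(q*θ)) := by
      rw [hB2, Real.mul_rpow (by positivity) (by positivity),
        Real.mul_rpow (by positivity) hI0,
        ← Real.rpow_mul hM0.le, ← Real.rpow_mul ht0.le,
        show q * (1/q) = 1 by field_simp, Real.rpow_one,
        show (d:ℝ)/θ * (1/q) = (d:ℝ)/(q*θ) by ring]
      have h2 : t ^ ((d:ℝ)/(q*θ)) ≤ (1+t) ^ ((d:ℝ)/(q*θ)) :=
        Real.rpow_le_rpow ht0.le (by linarith) (by positivity)
      exact mul_le_mul (le_add_of_nonneg_right zero_le_one) h2 (by positivity) (by positivity)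
    calc (∫⁻ (x : EuclideanSpace ℝ (Fin d)), (‖(‖x‖ ^ (d:ℕ) * G x t : ℝ)‖₊ : ℝ≥0∞) ^ q) ^ (1/q)
        ≤ (ENNReal.ofReal ((M*t)^q * a^((d:ℝ) - θ*q) * I)) ^ (1/q) :=
          ENNReal.rpow_le_rpow hlin (by positivity)
      _ = ENNReal.ofReal (((M*t)^q * a^((d:ℝ) - θ*q) * I) ^ (1/q)) :=
          ENNReal.ofReal_rpow_of_nonneg (by positivity) (by positivity)
      _ ≤ ENNReal.ofReal ((M * I ^ (1/q) + 1) * (1+t) ^ ((d:ℝ)/(q*θ))) :=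
          ENNReal.ofReal_le_ofReal hreal
  · -- compact part
    intro Kc _ hKc
    refine ⟨C * K ^ (d:ℕ) + C * K ^ (-θ), by positivity, ?_⟩
    intro t htK x
    have ht : 0 < t := hKc htK
    have ha0 : (0:ℝ) < t ^ (1/θ) := rpow_pos_of_pos ht _
    rcases le_total ‖x‖ (K * t ^ (1/θ)) with h | h
    · have := hcase1 t ht x h
      nlinarith [Real.rpow_pos_of_pos hK (-θ), hC0]
    · refine le_trans (hcase2 t ht x h) ?_
      have hx0 : (0:ℝ) < ‖x‖ := lt_of_lt_of_le (by positivity) h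
      have h1 : ‖x‖ ^ (-θ) ≤ (K * t ^ (1/θ)) ^ (-θ) :=
        Real.rpow_le_rpow_of_nonpos (by positivity) h (by linarith)
      have h2 : (K * t ^ (1/θ)) ^ (-θ) = K ^ (-θ) * t⁻¹ := by
        rw [Real.mul_rpow hK.le ha0.le, ← Real.rpow_mul ht.le]
        rw [show (1/θ) * (-θ) = -1 by field_simp, Real.rpow_neg_one]
      have : C * t * ‖x‖ ^ (-θ) ≤ C * t * (K ^ (-θ) * t⁻¹) := by
        exact mul_le_mul_of_nonneg_left (h1.trans_eq h2) (by positivity)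
      calc C * t * ‖x‖ ^ (-θ) ≤ C * t * (K ^ (-θ) * t⁻¹) := this
        _ = C * K ^ (-θ) := by field_simp
        _ ≤ C * K ^ (d:ℕ) + C * K ^ (-θ) := le_add_of_nonneg_left (by positivity)
end
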